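/- Let (E,d) be a complete metric space satisfying the median inequality, let G be a group of isometries of E, and let H be a subgroup of G of index 2. If H is fixating then G is fixating. -/

import Mathlib

/-!
Let `K ≤ G` have fixed points everywhere. Its subgroup `L = K ⊓ H` fixes some `x` because `H` is
fixating. If `K ≤ H` we are done; otherwise pick `σ ∈ K \ H`. Since `L` is normal in `K`, it also
fixes `σ x`, and since `σ² ∈ L`, the isometry `σ` swaps `x` and `σ x`. The median inequality makes
the median `m` of `x` and `σ x` the only point within distance `d(x, σ x)/2` of both, so `m` is
fixed by `L` and by `σ`, hence by `K = L ∪ σL`.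
-/

open MulAction

section Median

variable {E : Type*} [MetricSpace E]

def IsMedian (x y m : E) : Prop :=
  ∀ z : E, dist z m ^ 2 ≤ (dist z x ^ 2 + dist z y ^ 2) / 2 - dist x y ^ 2 / 4

namespace IsMedian

variable {x y m : E}

theorem dist_left_le (h : IsMedian x y m) : dist x m ≤ dist x y / 2 := by
  have := h x
  rw [dist_self] at this
  nlinarith [dist_nonneg (x := x) (y := m), dist_nonneg (x := x) (y := y)]

theorem dist_right_le (h : IsMedian x y m) : dist y m ≤ dist x y / 2 := by
  have := h y
  rw [dist_self, dist_comm y x] at this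
  nlinarith [dist_nonneg (x := y) (y := m), dist_nonneg (x := x) (y := y)]

theorem eq_of_dist_le (h : IsMedian x y m) {z : E} (hx : dist z x ≤ dist x y / 2)
    (hy : dist z y ≤ dist x y / 2) : z = m := by
  have := h z
  have hzm : dist z m = 0 := by
    nlinarith [dist_nonneg (x := z) (y := m), dist_nonneg (x := z) (y := x),
      dist_nonneg (x := z) (y := y)]
  exact dist_eq_zero.mp hzm

theorem apply_eq_of_isometry (h : IsMedian x y m) {f : E → E} (hf : Isometry f)
    (hxy : f x = x ∧ f y = y ∨ f x = y ∧ f y = x) : f m = m := by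
  have hfx : dist (f m) (f x) ≤ dist x y / 2 := by
    rw [hf.dist_eq, dist_comm]; exact h.dist_left_le
  have hfy : dist (f m) (f y) ≤ dist x y / 2 := by
    rw [hf.dist_eq, dist_comm]; exact h.dist_right_le
  rcases hxy with ⟨hx, hy⟩ | ⟨hx, hy⟩
  · rw [hx] at hfx; rw [hy] at hfy; exact h.eq_of_dist_le hfx hfy
  · rw [hx] at hfx; rw [hy] at hfy; exact h.eq_of_dist_le hfy hfx

end IsMedian

end Median

namespace Subgroup

variable {α : Type*} [Group α] {G H K S : Subgroup α} {a b : α}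

theorem mul_mem_iff_of_relIndex_eq_two (h : H.relIndex G = 2) (ha : a ∈ G) (hb : b ∈ G) :
    a * b ∈ H ↔ (a ∈ H ↔ b ∈ H) :=
  mul_mem_iff_of_index_two (a := ⟨a, ha⟩) (b := ⟨b, hb⟩) h

theorem conj_mem_of_relIndex_eq_two (h : H.relIndex G = 2) (ha : a ∈ G) (hb : b ∈ G)
    (hbH : b ∈ H) : a * b * a⁻¹ ∈ H := by
  rw [mul_mem_iff_of_relIndex_eq_two h (mul_mem ha hb) (inv_mem ha),
    mul_mem_iff_of_relIndex_eq_two h ha hb, inv_mem_iff]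
  simp only [hbH, iff_true]

theorem le_of_inf_le_of_relIndex_eq_two (h : H.relIndex G = 2) (hKG : K ≤ G) (haK : a ∈ K)
    (haH : a ∉ H) (hKH : K ⊓ H ≤ S) (haS : a ∈ S) : K ≤ S := by
  intro b hbK
  by_cases hbH : b ∈ H
  · exact hKH ⟨hbK, hbH⟩
  · have hab : a⁻¹ * b ∈ K ⊓ H := by
      refine mem_inf.mpr ⟨mul_mem (inv_mem haK) hbK, ?_⟩
      rw [mul_mem_iff_of_relIndex_eq_two h (inv_mem (hKG haK)) (hKG hbK), inv_mem_iff]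
      exact iff_of_false haH hbH
    simpa using mul_mem haS (hKH hab)

end Subgroup

theorem Equiv.Perm.apply_eq_of_conj_apply_eq {E : Type*} {g σ : Equiv.Perm E} {x : E}
    (h : (σ⁻¹ * g * σ) x = x) : g (σ x) = σ x := by
  rwa [Equiv.Perm.mul_apply, Equiv.Perm.mul_apply, Equiv.Perm.inv_eq_iff_eq] at h

theorem fixating_of_index_two_fixating_subgroup_general
    {E : Type*} [MetricSpace E]
    (hmed : ∀ x y : E, ∃ m : E, ∀ z : E,
      dist z m ^ 2 ≤ (dist z x ^ 2 + dist z y ^ 2) / 2 - dist x y ^ 2 / 4)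
    (G H : Subgroup (Equiv.Perm E))
    (hiso : ∀ g ∈ G, ∀ x y : E, dist (g x) (g y) = dist x y)
    (hindex : H.relIndex G = 2)
    (hHfix : ∀ K : Subgroup (Equiv.Perm E), K ≤ H →
      (∀ g ∈ K, ∃ x : E, g x = x) → ∃ x : E, ∀ g ∈ K, g x = x) :
    ∀ K : Subgroup (Equiv.Perm E), K ≤ G →
      (∀ g ∈ K, ∃ x : E, g x = x) → ∃ x : E, ∀ g ∈ K, g x = x := by
  intro K hKG hKfix
  obtain ⟨x, hx⟩ := hHfix (K ⊓ H) inf_le_right fun g hg => hKfix g hg.1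
  by_cases hKH : K ≤ H
  · exact ⟨x, fun g hg => hx g ⟨hg, hKH hg⟩⟩
  obtain ⟨σ, hσK, hσH⟩ := SetLike.not_le_iff_exists.mp hKH
  have hσG : σ ∈ G := hKG hσK
  have hσx : ∀ g ∈ K ⊓ H, g (σ x) = σ x := fun g hg =>
    Equiv.Perm.apply_eq_of_conj_apply_eq <| hx _ <|
      Subgroup.mem_inf.mpr ⟨mul_mem (mul_mem (inv_mem hσK) hg.1) hσK, by
        simpa using Subgroup.conj_mem_of_relIndex_eq_two hindex (inv_mem hσG) (hKG hg.1) hg.2⟩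
  have hσσ : σ * σ ∈ K ⊓ H :=
    Subgroup.mem_inf.mpr
      ⟨mul_mem hσK hσK, (Subgroup.mul_mem_iff_of_relIndex_eq_two hindex hσG hσG).2 Iff.rfl⟩
  obtain ⟨m, hm⟩ : ∃ m, IsMedian x (σ x) m := hmed x (σ x)
  have hLm : K ⊓ H ≤ stabilizer (Equiv.Perm E) m := fun g hg =>
    hm.apply_eq_of_isometry (.of_dist_eq (hiso g (hKG hg.1))) (.inl ⟨hx g hg, hσx g hg⟩)
  have hσm : σ ∈ stabilizer (Equiv.Perm E) m :=
    hm.apply_eq_of_isometry (.of_dist_eq (hiso σ hσG)) (.inr ⟨rfl, hx _ hσσ⟩)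
  exact ⟨m, fun g hg => Subgroup.le_of_inf_le_of_relIndex_eq_two hindex hKG hσK hσH hLm hσm hg⟩

/-- Let `E` be a complete metric space satisfying the median inequality, `G` a
group of isometries of `E`, and `H ≤ G` a subgroup of index `2`. If `H` is
fixating (every GAF subgroup of `H` is a GAG) then `G` is fixating. -/
theorem fixating_of_index_two_fixating_subgroup
    {E : Type*} [MetricSpace E] [CompleteSpace E]
    (hmed : ∀ x y : E, ∃ m : E, ∀ z : E,
      dist z m ^ 2 ≤ (dist z x ^ 2 + dist z y ^ 2) / 2 - dist x y ^ 2 / 4)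
    (G H : Subgroup (Equiv.Perm E))
    (hiso : ∀ g ∈ G, ∀ x y : E, dist (g x) (g y) = dist x y)
    (hHG : H ≤ G)
    (hindex : H.relIndex G = 2)
    (hHfix : ∀ K : Subgroup (Equiv.Perm E), K ≤ H →
      (∀ g ∈ K, ∃ x : E, g x = x) → ∃ x : E, ∀ g ∈ K, g x = x) :
    ∀ K : Subgroup (Equiv.Perm E), K ≤ G →
      (∀ g ∈ K, ∃ x : E, g x = x) → ∃ x : E, ∀ g ∈ K, g x = x :=
  fixating_of_index_two_fixating_subgroup_general hmed G H hiso hindex hHfix
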